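/- Let (V,E) be a link stream, Δ > 0, and let (X,[b,e]) be a maximal Δ-clique. Then e − b ≥ Δ, i.e., the time interval of any maximal Δ-clique has duration at least Δ. -/

import Mathlib

/-- A link stream has node type `α` (finite) and a finite set `E` of timed links
`(t, u, v) : ℝ × α × α`.  For a duration `Δ`, `(X, [b, e])` is a `Δ`-clique when
`2 ≤ |X|`, `b ≤ e`, and every pair of distinct nodes of `X` interacts at least once
in every window `[τ, min (τ + Δ) e]` for `τ ∈ [b, max (e - Δ) b]`. -/
def IsDeltaClique {α : Type*} (E : Finset (ℝ × α × α)) (Δ : ℝ)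
    (X : Finset α) (b e : ℝ) : Prop :=
  2 ≤ X.card ∧ b ≤ e ∧
    ∀ u ∈ X, ∀ v ∈ X, u ≠ v →
      ∀ τ : ℝ, b ≤ τ → τ ≤ max (e - Δ) b →
        ∃ t : ℝ, τ ≤ t ∧ t ≤ min (τ + Δ) e ∧ (t, u, v) ∈ E

/-- A `Δ`-clique `(X, [b, e])` is maximal if any `Δ`-clique `(X', [b', e'])` with
`X ⊆ X'` and `[b, e] ⊆ [b', e']` equals it. -/
def IsMaxDeltaClique {α : Type*} (E : Finset (ℝ × α × α)) (Δ : ℝ)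
    (X : Finset α) (b e : ℝ) : Prop :=
  IsDeltaClique E Δ X b e ∧
    ∀ X' : Finset α, ∀ b' e' : ℝ,
      IsDeltaClique E Δ X' b' e' → X ⊆ X' → b' ≤ b → e ≤ e' →
        X' = X ∧ b' = b ∧ e' = e

/-! If `e - b < Δ`, the only constraint on a Δ-clique on `[b, e]` is a single window starting at
`b`, which already reaches `e`; so the same links witness a Δ-clique on `[e - Δ, e]`, and
maximality forces `b = e - Δ`. -/

theorem IsDeltaClique.extend_left {α : Type*} {E : Finset (ℝ × α × α)} {Δ : ℝ} {X : Finset α}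
    {b e : ℝ} (h : IsDeltaClique E Δ X b e) {b' : ℝ} (hb' : b' ≤ b) (hΔ : e - Δ ≤ b') :
    IsDeltaClique E Δ X b' e := by
  obtain ⟨hcard, hbe, hlinks⟩ := h
  refine ⟨hcard, hb'.trans hbe, fun u hu v hv huv τ hτ hτ' => ?_⟩
  have hτb' : τ = b' := le_antisymm (by simpa [hΔ] using hτ') hτ
  obtain ⟨t, hbt, hte, htE⟩ := hlinks u hu v hv huv b le_rfl (le_max_right _ _)
  refine ⟨t, by linarith, ?_, htE⟩
  rw [hτb', min_eq_right (by linarith)]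
  exact hte.trans (min_le_right _ _)

theorem max_clique_duration_general {α : Type*}
    (E : Finset (ℝ × α × α)) (Δ : ℝ)
    (X : Finset α) (b e : ℝ) (hmax : IsMaxDeltaClique E Δ X b e) :
    Δ ≤ e - b := by
  by_contra! hshort
  obtain ⟨hclique, hmaximal⟩ := hmax
  have hextended : IsDeltaClique E Δ X (e - Δ) e := hclique.extend_left (by linarith) le_rfl
  obtain ⟨-, hb, -⟩ := hmaximal X (e - Δ) e hextended subset_rfl (by linarith) le_rfl
  linarith

/-- the time interval of any maximal `Δ`-clique has duration at least `Δ`. -/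
theorem max_clique_duration {α : Type*} [Fintype α] [DecidableEq α]
    (E : Finset (ℝ × α × α)) (Δ : ℝ) (hΔ : 0 < Δ)
    (hsym : ∀ t u v, (t, u, v) ∈ E → (t, v, u) ∈ E)
    (hloop : ∀ t v, (t, v, v) ∉ E)
    (X : Finset α) (b e : ℝ) (hmax : IsMaxDeltaClique E Δ X b e) :
    Δ ≤ e - b :=
  max_clique_duration_general E Δ X b e hmax
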